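/- A linear identity of any length 2n, n ≥ 1, is ultimately AC-nice if and only if, up to interchanging its two sides (identifying ⟨s,t,f⟩ with ⟨t,s,f⁻¹⟩), it is the linear identity of length 6 asserting (a₁*a₂)*a₃ = a₂*(a₃*a₁) for all a₁, a₂, a₃, i.e., the identity (x*y)*z = y*(z*x). -/
import Mathlib


/-- Bracketings: full binary trees in which every internal node has two children. -/
inductive Brack : Type
  | leaf : Brack
  | node : Brack → Brack → Brack

/-- Number of leaves of a bracketing. -/
def Brack.leaves : Brack → ℕ
  | .leaf => 1
  | .node l r => l.leaves + r.leaves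

/-- The `s`-product in a magma `G`: evaluate the bracketing `s`, labelling its leaves
from left to right by `a k, a (k+1), …`. -/
def Brack.eval {G : Type*} [Mul G] : Brack → (ℕ → G) → ℕ → G
  | .leaf, a, k => a k
  | .node l r, a, k => l.eval a k * r.eval a (k + l.leaves)

/-- Extend a permutation of `{0, …, n−1}` to `ℕ` (identity elsewhere). -/
def permNat {n : ℕ} (f : Equiv.Perm (Fin n)) (i : ℕ) : ℕ :=
  if h : i < n then (f ⟨i, h⟩ : ℕ) else i

/-- A magma `G` satisfies the linear identity `⟨s, t, f⟩` if for all `a₁, …, aₙ ∈ G`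
the `s`-product of `(a₁, …, aₙ)` equals the `t`-product of `(a_{f(1)}, …, a_{f(n)})`. -/
def Satisfies (G : Type*) [Mul G] {n : ℕ} (s t : Brack) (f : Equiv.Perm (Fin n)) : Prop :=
  ∀ a : ℕ → G, s.eval a 0 = t.eval (fun i => a (permNat f i)) 0

/-- A magma `G` is `m`AC-nice if any two products of the same `m` elements coincide:
for every `a`, all bracketings `s, t` with `m` leaves and all permutations `f, g`,
the `s`-product of `(a_{f(1)}, …, a_{f(m)})` equals the `t`-product of
`(a_{g(1)}, …, a_{g(m)})`. -/
def ACnice (G : Type*) [Mul G] (m : ℕ) : Prop :=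
  ∀ (a : ℕ → G) (s t : Brack), s.leaves = m → t.leaves = m →
    ∀ f g : Equiv.Perm (Fin m),
      s.eval (fun i => a (permNat f i)) 0 = t.eval (fun i => a (permNat g i)) 0

namespace UAC

lemma leaves_pos (u : Brack) : 1 ≤ u.leaves := by
  induction u with
  | leaf => simp [Brack.leaves]
  | node l r ihl ihr => simp [Brack.leaves]; omega

lemma enum1 (u : Brack) (h : u.leaves = 1) : u = .leaf := by
  cases u with
  | leaf => rfl
  | node l r => exfalso; have := leaves_pos l; have := leaves_pos r; simp [Brack.leaves] at h; omega

lemma enum2 (u : Brack) (h : u.leaves = 2) : u = .node .leaf .leaf := by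
  cases u with
  | leaf => simp [Brack.leaves] at h
  | node l r =>
    have hl := leaves_pos l; have hr := leaves_pos r
    simp [Brack.leaves] at h
    have : l.leaves = 1 ∧ r.leaves = 1 := by omega
    rw [enum1 l this.1, enum1 r this.2]

lemma enum3 (u : Brack) (h : u.leaves = 3) :
    u = .node .leaf (.node .leaf .leaf) ∨ u = .node (.node .leaf .leaf) .leaf := by
  cases u with
  | leaf => simp [Brack.leaves] at h
  | node l r =>
    have hl := leaves_pos l; have hr := leaves_pos r
    simp [Brack.leaves] at h
    rcases (by omega : l.leaves = 1 ∧ r.leaves = 2 ∨ l.leaves = 2 ∧ r.leaves = 1) with ⟨h1,h2⟩|⟨h1,h2⟩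
    · left; rw [enum1 l h1, enum2 r h2]
    · right; rw [enum2 l h1, enum1 r h2]

lemma enum4 (u : Brack) (h : u.leaves = 4) :
    u = .node .leaf (.node .leaf (.node .leaf .leaf)) ∨
    u = .node .leaf (.node (.node .leaf .leaf) .leaf) ∨
    u = .node (.node .leaf .leaf) (.node .leaf .leaf) ∨
    u = .node (.node .leaf (.node .leaf .leaf)) .leaf ∨
    u = .node (.node (.node .leaf .leaf) .leaf) .leaf := by
  cases u with
  | leaf => simp [Brack.leaves] at h
  | node l r =>
    have hl := leaves_pos l; have hr := leaves_pos r
    simp [Brack.leaves] at h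
    rcases (by omega : l.leaves = 1 ∧ r.leaves = 3 ∨ l.leaves = 2 ∧ r.leaves = 2 ∨ l.leaves = 3 ∧ r.leaves = 1) with ⟨h1,h2⟩|⟨h1,h2⟩|⟨h1,h2⟩
    · rcases enum3 r h2 with h3|h3 <;> rw [enum1 l h1, h3] <;> tauto
    · rw [enum2 l h1, enum2 r h2]; tauto
    · rcases enum3 l h1 with h3|h3 <;> rw [h3, enum1 r h2] <;> tauto

section
variable {G : Type*} [Mul G]
private lemma shape1 (hL : ∀ x y z : G, (x*y)*z = y*(z*x)) (a b c d e : G) :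
    (a * (b * (c * (d * e)))) = (a * (b * (c * (d * e)))) := by
  rfl

private lemma shape2 (hL : ∀ x y z : G, (x*y)*z = y*(z*x)) (a b c d e : G) :
    (a * (b * ((c * d) * e))) = (a * (b * (c * (d * e)))) := by
  calc (a * (b * ((c * d) * e)))
    _ = (a * ((e * b) * (c * d))) := by rw [← hL e b (c * d)]
    _ = (((c * d) * a) * (e * b)) := by rw [← hL (c * d) a (e * b)]
    _ = ((d * (a * c)) * (e * b)) := by rw [hL c d a]
    _ = ((a * c) * ((e * b) * d)) := by rw [hL d (a * c) (e * b)]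
    _ = ((a * c) * (b * (d * e))) := by rw [hL e b d]
    _ = (((d * e) * (a * c)) * b) := by rw [← hL (d * e) (a * c) b]
    _ = (((c * (d * e)) * a) * b) := by rw [← hL c (d * e) a]
    _ = (a * (b * (c * (d * e)))) := by rw [hL (c * (d * e)) a b]

private lemma shape3 (hL : ∀ x y z : G, (x*y)*z = y*(z*x)) (a b c d e : G) :
    (a * ((b * c) * (d * e))) = (a * (b * (c * (d * e)))) := by
  calc (a * ((b * c) * (d * e)))
    _ = (a * (c * ((d * e) * b))) := by rw [hL b c (d * e)]
    _ = ((((d * e) * b) * a) * c) := by rw [← hL ((d * e) * b) a c]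
    _ = ((b * (a * (d * e))) * c) := by rw [hL (d * e) b a]
    _ = ((b * ((e * a) * d)) * c) := by rw [← hL e a d]
    _ = (((d * b) * (e * a)) * c) := by rw [← hL d b (e * a)]
    _ = ((e * a) * (c * (d * b))) := by rw [hL (d * b) (e * a) c]
    _ = (a * ((c * (d * b)) * e)) := by rw [hL e a (c * (d * b))]
    _ = (a * ((d * b) * (e * c))) := by rw [hL c (d * b) e]
    _ = (a * (b * ((e * c) * d))) := by rw [hL d b (e * c)]
    _ = (a * (b * (c * (d * e)))) := by rw [hL e c d]

private lemma shape4 (hL : ∀ x y z : G, (x*y)*z = y*(z*x)) (a b c d e : G) :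
    (a * ((b * (c * d)) * e)) = (a * (b * (c * (d * e)))) := by
  calc (a * ((b * (c * d)) * e))
    _ = (a * ((c * d) * (e * b))) := by rw [hL b (c * d) e]
    _ = (a * (d * ((e * b) * c))) := by rw [hL c d (e * b)]
    _ = (a * (d * (b * (c * e)))) := by rw [hL e b c]
    _ = (((b * (c * e)) * a) * d) := by rw [← hL (b * (c * e)) a d]
    _ = (((c * e) * (a * b)) * d) := by rw [hL b (c * e) a]
    _ = ((e * ((a * b) * c)) * d) := by rw [hL c e (a * b)]
    _ = ((e * (b * (c * a))) * d) := by rw [hL a b c]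
    _ = ((b * (c * a)) * (d * e)) := by rw [hL e (b * (c * a)) d]
    _ = ((c * a) * ((d * e) * b)) := by rw [hL b (c * a) (d * e)]
    _ = (a * (((d * e) * b) * c)) := by rw [hL c a ((d * e) * b)]
    _ = (a * (b * (c * (d * e)))) := by rw [hL (d * e) b c]

private lemma shape5 (hL : ∀ x y z : G, (x*y)*z = y*(z*x)) (a b c d e : G) :
    (a * (((b * c) * d) * e)) = (a * (b * (c * (d * e)))) := by
  calc (a * (((b * c) * d) * e))
    _ = (a * ((c * (d * b)) * e)) := by rw [hL b c d]
    _ = (a * ((d * b) * (e * c))) := by rw [hL c (d * b) e]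
    _ = (a * (b * ((e * c) * d))) := by rw [hL d b (e * c)]
    _ = (a * (b * (c * (d * e)))) := by rw [hL e c d]

private lemma shape6 (hL : ∀ x y z : G, (x*y)*z = y*(z*x)) (a b c d e : G) :
    ((a * b) * (c * (d * e))) = (a * (b * (c * (d * e)))) := by
  calc ((a * b) * (c * (d * e)))
    _ = ((a * b) * ((e * c) * d)) := by rw [← hL e c d]
    _ = (b * (((e * c) * d) * a)) := by rw [hL a b ((e * c) * d)]
    _ = (b * (d * (a * (e * c)))) := by rw [hL (e * c) d a]
    _ = (b * (d * ((c * a) * e))) := by rw [← hL c a e]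
    _ = ((((c * a) * e) * b) * d) := by rw [← hL ((c * a) * e) b d]
    _ = ((e * (b * (c * a))) * d) := by rw [hL (c * a) e b]
    _ = ((b * (c * a)) * (d * e)) := by rw [hL e (b * (c * a)) d]
    _ = ((c * a) * ((d * e) * b)) := by rw [hL b (c * a) (d * e)]
    _ = (a * (((d * e) * b) * c)) := by rw [hL c a ((d * e) * b)]
    _ = (a * (b * (c * (d * e)))) := by rw [hL (d * e) b c]

private lemma shape7 (hL : ∀ x y z : G, (x*y)*z = y*(z*x)) (a b c d e : G) :
    ((a * b) * ((c * d) * e)) = (a * (b * (c * (d * e)))) := by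
  calc ((a * b) * ((c * d) * e))
    _ = ((a * b) * (d * (e * c))) := by rw [hL c d e]
    _ = (((e * c) * (a * b)) * d) := by rw [← hL (e * c) (a * b) d]
    _ = (((b * (e * c)) * a) * d) := by rw [← hL b (e * c) a]
    _ = ((((c * b) * e) * a) * d) := by rw [← hL c b e]
    _ = (a * (d * ((c * b) * e))) := by rw [hL ((c * b) * e) a d]
    _ = (a * ((e * d) * (c * b))) := by rw [← hL e d (c * b)]
    _ = (a * ((b * (e * d)) * c)) := by rw [← hL b (e * d) c]
    _ = ((c * a) * (b * (e * d))) := by rw [← hL c a (b * (e * d))]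
    _ = (((e * d) * (c * a)) * b) := by rw [← hL (e * d) (c * a) b]
    _ = ((d * ((c * a) * e)) * b) := by rw [hL e d (c * a)]
    _ = ((d * (a * (e * c))) * b) := by rw [hL c a e]
    _ = ((((e * c) * d) * a) * b) := by rw [← hL (e * c) d a]
    _ = (((c * (d * e)) * a) * b) := by rw [hL e c d]
    _ = (a * (b * (c * (d * e)))) := by rw [hL (c * (d * e)) a b]

private lemma shape8 (hL : ∀ x y z : G, (x*y)*z = y*(z*x)) (a b c d e : G) :
    ((a * (b * c)) * (d * e)) = (a * (b * (c * (d * e)))) := by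
  calc ((a * (b * c)) * (d * e))
    _ = ((e * (a * (b * c))) * d) := by rw [← hL e (a * (b * c)) d]
    _ = ((((b * c) * e) * a) * d) := by rw [← hL (b * c) e a]
    _ = (((c * (e * b)) * a) * d) := by rw [hL b c e]
    _ = (((e * b) * (a * c)) * d) := by rw [hL c (e * b) a]
    _ = ((a * c) * (d * (e * b))) := by rw [hL (e * b) (a * c) d]
    _ = ((a * c) * ((b * d) * e)) := by rw [← hL b d e]
    _ = ((e * (a * c)) * (b * d)) := by rw [← hL e (a * c) (b * d)]
    _ = (((c * e) * a) * (b * d)) := by rw [← hL c e a]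
    _ = (a * ((b * d) * (c * e))) := by rw [hL (c * e) a (b * d)]
    _ = (a * ((e * (b * d)) * c)) := by rw [← hL e (b * d) c]
    _ = (a * (((d * e) * b) * c)) := by rw [← hL d e b]
    _ = (a * (b * (c * (d * e)))) := by rw [hL (d * e) b c]

private lemma shape9 (hL : ∀ x y z : G, (x*y)*z = y*(z*x)) (a b c d e : G) :
    (((a * b) * c) * (d * e)) = (a * (b * (c * (d * e)))) := by
  calc (((a * b) * c) * (d * e))
    _ = ((b * (c * a)) * (d * e)) := by rw [hL a b c]
    _ = ((c * a) * ((d * e) * b)) := by rw [hL b (c * a) (d * e)]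
    _ = (a * (((d * e) * b) * c)) := by rw [hL c a ((d * e) * b)]
    _ = (a * (b * (c * (d * e)))) := by rw [hL (d * e) b c]

private lemma shape10 (hL : ∀ x y z : G, (x*y)*z = y*(z*x)) (a b c d e : G) :
    ((a * (b * (c * d))) * e) = (a * (b * (c * (d * e)))) := by
  calc ((a * (b * (c * d))) * e)
    _ = ((a * ((d * b) * c)) * e) := by rw [← hL d b c]
    _ = (((d * b) * c) * (e * a)) := by rw [hL a ((d * b) * c) e]
    _ = (c * ((e * a) * (d * b))) := by rw [hL (d * b) c (e * a)]
    _ = (c * (a * ((d * b) * e))) := by rw [hL e a (d * b)]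
    _ = (c * (a * (b * (e * d)))) := by rw [hL d b e]
    _ = (c * (((e * d) * a) * b)) := by rw [← hL (e * d) a b]
    _ = ((b * c) * ((e * d) * a)) := by rw [← hL b c ((e * d) * a)]
    _ = ((a * (b * c)) * (e * d)) := by rw [← hL a (b * c) (e * d)]
    _ = (((c * a) * b) * (e * d)) := by rw [← hL c a b]
    _ = ((d * ((c * a) * b)) * e) := by rw [← hL d ((c * a) * b) e]
    _ = (((b * d) * (c * a)) * e) := by rw [← hL b d (c * a)]
    _ = ((c * a) * (e * (b * d))) := by rw [hL (b * d) (c * a) e]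
    _ = ((c * a) * ((d * e) * b)) := by rw [← hL d e b]
    _ = (a * (((d * e) * b) * c)) := by rw [hL c a ((d * e) * b)]
    _ = (a * (b * (c * (d * e)))) := by rw [hL (d * e) b c]

private lemma shape11 (hL : ∀ x y z : G, (x*y)*z = y*(z*x)) (a b c d e : G) :
    ((a * ((b * c) * d)) * e) = (a * (b * (c * (d * e)))) := by
  calc ((a * ((b * c) * d)) * e)
    _ = (((d * a) * (b * c)) * e) := by rw [← hL d a (b * c)]
    _ = (((c * (d * a)) * b) * e) := by rw [← hL c (d * a) b]
    _ = (b * (e * (c * (d * a)))) := by rw [hL (c * (d * a)) b e]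
    _ = (b * (((d * a) * e) * c)) := by rw [← hL (d * a) e c]
    _ = (b * ((a * (e * d)) * c)) := by rw [hL d a e]
    _ = (b * ((e * d) * (c * a))) := by rw [hL a (e * d) c]
    _ = (b * (d * ((c * a) * e))) := by rw [hL e d (c * a)]
    _ = ((((c * a) * e) * b) * d) := by rw [← hL ((c * a) * e) b d]
    _ = ((e * (b * (c * a))) * d) := by rw [hL (c * a) e b]
    _ = ((b * (c * a)) * (d * e)) := by rw [hL e (b * (c * a)) d]
    _ = ((c * a) * ((d * e) * b)) := by rw [hL b (c * a) (d * e)]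
    _ = (a * (((d * e) * b) * c)) := by rw [hL c a ((d * e) * b)]
    _ = (a * (b * (c * (d * e)))) := by rw [hL (d * e) b c]

private lemma shape12 (hL : ∀ x y z : G, (x*y)*z = y*(z*x)) (a b c d e : G) :
    (((a * b) * (c * d)) * e) = (a * (b * (c * (d * e)))) := by
  calc (((a * b) * (c * d)) * e)
    _ = ((b * ((c * d) * a)) * e) := by rw [hL a b (c * d)]
    _ = ((b * (d * (a * c))) * e) := by rw [hL c d a]
    _ = ((d * (a * c)) * (e * b)) := by rw [hL b (d * (a * c)) e]
    _ = ((a * c) * ((e * b) * d)) := by rw [hL d (a * c) (e * b)]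
    _ = ((a * c) * (b * (d * e))) := by rw [hL e b d]
    _ = (((d * e) * (a * c)) * b) := by rw [← hL (d * e) (a * c) b]
    _ = (((c * (d * e)) * a) * b) := by rw [← hL c (d * e) a]
    _ = (a * (b * (c * (d * e)))) := by rw [hL (c * (d * e)) a b]

private lemma shape13 (hL : ∀ x y z : G, (x*y)*z = y*(z*x)) (a b c d e : G) :
    (((a * (b * c)) * d) * e) = (a * (b * (c * (d * e)))) := by
  calc (((a * (b * c)) * d) * e)
    _ = ((((c * a) * b) * d) * e) := by rw [← hL c a b]
    _ = ((b * (d * (c * a))) * e) := by rw [hL (c * a) b d]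
    _ = ((b * ((a * d) * c)) * e) := by rw [← hL a d c]
    _ = (((a * d) * c) * (e * b)) := by rw [hL b ((a * d) * c) e]
    _ = (c * ((e * b) * (a * d))) := by rw [hL (a * d) c (e * b)]
    _ = (c * ((d * (e * b)) * a)) := by rw [← hL d (e * b) a]
    _ = (c * (((b * d) * e) * a)) := by rw [← hL b d e]
    _ = (c * (e * (a * (b * d)))) := by rw [hL (b * d) e a]
    _ = (((a * (b * d)) * c) * e) := by rw [← hL (a * (b * d)) c e]
    _ = (((b * d) * (c * a)) * e) := by rw [hL a (b * d) c]
    _ = ((c * a) * (e * (b * d))) := by rw [hL (b * d) (c * a) e]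
    _ = ((c * a) * ((d * e) * b)) := by rw [← hL d e b]
    _ = (a * (((d * e) * b) * c)) := by rw [hL c a ((d * e) * b)]
    _ = (a * (b * (c * (d * e)))) := by rw [hL (d * e) b c]

private lemma shape14 (hL : ∀ x y z : G, (x*y)*z = y*(z*x)) (a b c d e : G) :
    ((((a * b) * c) * d) * e) = (a * (b * (c * (d * e)))) := by
  calc ((((a * b) * c) * d) * e)
    _ = ((c * (d * (a * b))) * e) := by rw [hL (a * b) c d]
    _ = ((d * (a * b)) * (e * c)) := by rw [hL c (d * (a * b)) e]
    _ = ((a * b) * ((e * c) * d)) := by rw [hL d (a * b) (e * c)]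
    _ = (b * (((e * c) * d) * a)) := by rw [hL a b ((e * c) * d)]
    _ = (b * (d * (a * (e * c)))) := by rw [hL (e * c) d a]
    _ = (b * (d * ((c * a) * e))) := by rw [← hL c a e]
    _ = ((((c * a) * e) * b) * d) := by rw [← hL ((c * a) * e) b d]
    _ = ((e * (b * (c * a))) * d) := by rw [hL (c * a) e b]
    _ = ((b * (c * a)) * (d * e)) := by rw [hL e (b * (c * a)) d]
    _ = ((c * a) * ((d * e) * b)) := by rw [hL b (c * a) (d * e)]
    _ = (a * (((d * e) * b) * c)) := by rw [hL c a ((d * e) * b)]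
    _ = (a * (b * (c * (d * e)))) := by rw [hL (d * e) b c]

private lemma swap01 (hL : ∀ x y z : G, (x*y)*z = y*(z*x)) (a b c d e : G) :
    (b * (a * (c * (d * e)))) = (a * (b * (c * (d * e)))) := by
  calc (b * (a * (c * (d * e))))
    _ = (b * (((d * e) * a) * c)) := by rw [← hL (d * e) a c]
    _ = (b * ((e * (a * d)) * c)) := by rw [hL d e a]
    _ = (b * ((a * d) * (c * e))) := by rw [hL e (a * d) c]
    _ = (((c * e) * b) * (a * d)) := by rw [← hL (c * e) b (a * d)]
    _ = ((d * ((c * e) * b)) * a) := by rw [← hL d ((c * e) * b) a]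
    _ = (((b * d) * (c * e)) * a) := by rw [← hL b d (c * e)]
    _ = (((e * (b * d)) * c) * a) := by rw [← hL e (b * d) c]
    _ = (c * (a * (e * (b * d)))) := by rw [hL (e * (b * d)) c a]
    _ = (c * (((b * d) * a) * e)) := by rw [← hL (b * d) a e]
    _ = ((e * c) * ((b * d) * a)) := by rw [← hL e c ((b * d) * a)]
    _ = ((a * (e * c)) * (b * d)) := by rw [← hL a (e * c) (b * d)]
    _ = ((d * (a * (e * c))) * b) := by rw [← hL d (a * (e * c)) b]
    _ = ((((e * c) * d) * a) * b) := by rw [← hL (e * c) d a]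
    _ = (((c * (d * e)) * a) * b) := by rw [hL e c d]
    _ = (a * (b * (c * (d * e)))) := by rw [hL (c * (d * e)) a b]

private lemma swap02 (hL : ∀ x y z : G, (x*y)*z = y*(z*x)) (a b c d e : G) :
    (c * (b * (a * (d * e)))) = (a * (b * (c * (d * e)))) := by
  calc (c * (b * (a * (d * e))))
    _ = (c * (b * ((e * a) * d))) := by rw [← hL e a d]
    _ = (c * ((d * b) * (e * a))) := by rw [← hL d b (e * a)]
    _ = (((e * a) * c) * (d * b)) := by rw [← hL (e * a) c (d * b)]
    _ = ((a * (c * e)) * (d * b)) := by rw [hL e a c]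
    _ = ((b * (a * (c * e))) * d) := by rw [← hL b (a * (c * e)) d]
    _ = ((((c * e) * b) * a) * d) := by rw [← hL (c * e) b a]
    _ = (a * (d * ((c * e) * b))) := by rw [hL ((c * e) * b) a d]
    _ = (a * ((b * d) * (c * e))) := by rw [← hL b d (c * e)]
    _ = (a * ((e * (b * d)) * c)) := by rw [← hL e (b * d) c]
    _ = (a * (((d * e) * b) * c)) := by rw [← hL d e b]
    _ = (a * (b * (c * (d * e)))) := by rw [hL (d * e) b c]

private lemma swap03 (hL : ∀ x y z : G, (x*y)*z = y*(z*x)) (a b c d e : G) :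
    (d * (b * (c * (a * e)))) = (a * (b * (c * (d * e)))) := by
  calc (d * (b * (c * (a * e))))
    _ = (d * (b * ((e * c) * a))) := by rw [← hL e c a]
    _ = (d * ((a * b) * (e * c))) := by rw [← hL a b (e * c)]
    _ = (((e * c) * d) * (a * b)) := by rw [← hL (e * c) d (a * b)]
    _ = ((c * (d * e)) * (a * b)) := by rw [hL e c d]
    _ = ((b * (c * (d * e))) * a) := by rw [← hL b (c * (d * e)) a]
    _ = ((((d * e) * b) * c) * a) := by rw [← hL (d * e) b c]
    _ = (((e * (b * d)) * c) * a) := by rw [hL d e b]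
    _ = (c * (a * (e * (b * d)))) := by rw [hL (e * (b * d)) c a]
    _ = (c * (((b * d) * a) * e)) := by rw [← hL (b * d) a e]
    _ = ((e * c) * ((b * d) * a)) := by rw [← hL e c ((b * d) * a)]
    _ = ((a * (e * c)) * (b * d)) := by rw [← hL a (e * c) (b * d)]
    _ = ((d * (a * (e * c))) * b) := by rw [← hL d (a * (e * c)) b]
    _ = ((((e * c) * d) * a) * b) := by rw [← hL (e * c) d a]
    _ = (((c * (d * e)) * a) * b) := by rw [hL e c d]
    _ = (a * (b * (c * (d * e)))) := by rw [hL (c * (d * e)) a b]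

private lemma swap04 (hL : ∀ x y z : G, (x*y)*z = y*(z*x)) (a b c d e : G) :
    (e * (b * (c * (d * a)))) = (a * (b * (c * (d * e)))) := by
  calc (e * (b * (c * (d * a))))
    _ = (e * (((d * a) * b) * c)) := by rw [← hL (d * a) b c]
    _ = (e * ((a * (b * d)) * c)) := by rw [hL d a b]
    _ = (e * ((b * d) * (c * a))) := by rw [hL a (b * d) c]
    _ = (((c * a) * e) * (b * d)) := by rw [← hL (c * a) e (b * d)]
    _ = ((a * (e * c)) * (b * d)) := by rw [hL c a e]
    _ = ((d * (a * (e * c))) * b) := by rw [← hL d (a * (e * c)) b]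
    _ = ((((e * c) * d) * a) * b) := by rw [← hL (e * c) d a]
    _ = (((c * (d * e)) * a) * b) := by rw [hL e c d]
    _ = (a * (b * (c * (d * e)))) := by rw [hL (c * (d * e)) a b]

private lemma swap12 (hL : ∀ x y z : G, (x*y)*z = y*(z*x)) (a b c d e : G) :
    (a * (c * (b * (d * e)))) = (a * (b * (c * (d * e)))) := by
  calc (a * (c * (b * (d * e))))
    _ = (a * (((d * e) * c) * b)) := by rw [← hL (d * e) c b]
    _ = ((b * a) * ((d * e) * c)) := by rw [← hL b a ((d * e) * c)]
    _ = ((c * (b * a)) * (d * e)) := by rw [← hL c (b * a) (d * e)]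
    _ = ((e * (c * (b * a))) * d) := by rw [← hL e (c * (b * a)) d]
    _ = ((((b * a) * e) * c) * d) := by rw [← hL (b * a) e c]
    _ = (((a * (e * b)) * c) * d) := by rw [hL b a e]
    _ = (c * (d * (a * (e * b)))) := by rw [hL (a * (e * b)) c d]
    _ = (c * (((e * b) * d) * a)) := by rw [← hL (e * b) d a]
    _ = (c * ((b * (d * e)) * a)) := by rw [hL e b d]
    _ = ((a * c) * (b * (d * e))) := by rw [← hL a c (b * (d * e))]
    _ = (((d * e) * (a * c)) * b) := by rw [← hL (d * e) (a * c) b]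
    _ = (((c * (d * e)) * a) * b) := by rw [← hL c (d * e) a]
    _ = (a * (b * (c * (d * e)))) := by rw [hL (c * (d * e)) a b]

private lemma swap13 (hL : ∀ x y z : G, (x*y)*z = y*(z*x)) (a b c d e : G) :
    (a * (d * (c * (b * e)))) = (a * (b * (c * (d * e)))) := by
  calc (a * (d * (c * (b * e))))
    _ = (a * (d * ((e * c) * b))) := by rw [← hL e c b]
    _ = ((((e * c) * b) * a) * d) := by rw [← hL ((e * c) * b) a d]
    _ = ((b * (a * (e * c))) * d) := by rw [hL (e * c) b a]
    _ = ((b * ((c * a) * e)) * d) := by rw [← hL c a e]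
    _ = (((e * b) * (c * a)) * d) := by rw [← hL e b (c * a)]
    _ = (((a * (e * b)) * c) * d) := by rw [← hL a (e * b) c]
    _ = (c * (d * (a * (e * b)))) := by rw [hL (a * (e * b)) c d]
    _ = (c * (((e * b) * d) * a)) := by rw [← hL (e * b) d a]
    _ = (c * ((b * (d * e)) * a)) := by rw [hL e b d]
    _ = ((a * c) * (b * (d * e))) := by rw [← hL a c (b * (d * e))]
    _ = (((d * e) * (a * c)) * b) := by rw [← hL (d * e) (a * c) b]
    _ = (((c * (d * e)) * a) * b) := by rw [← hL c (d * e) a]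
    _ = (a * (b * (c * (d * e)))) := by rw [hL (c * (d * e)) a b]

private lemma swap14 (hL : ∀ x y z : G, (x*y)*z = y*(z*x)) (a b c d e : G) :
    (a * (e * (c * (d * b)))) = (a * (b * (c * (d * e)))) := by
  calc (a * (e * (c * (d * b))))
    _ = (a * (((d * b) * e) * c)) := by rw [← hL (d * b) e c]
    _ = (a * ((b * (e * d)) * c)) := by rw [hL d b e]
    _ = ((c * a) * (b * (e * d))) := by rw [← hL c a (b * (e * d))]
    _ = (((e * d) * (c * a)) * b) := by rw [← hL (e * d) (c * a) b]
    _ = ((d * ((c * a) * e)) * b) := by rw [hL e d (c * a)]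
    _ = ((d * (a * (e * c))) * b) := by rw [hL c a e]
    _ = ((((e * c) * d) * a) * b) := by rw [← hL (e * c) d a]
    _ = (((c * (d * e)) * a) * b) := by rw [hL e c d]
    _ = (a * (b * (c * (d * e)))) := by rw [hL (c * (d * e)) a b]

private lemma swap23 (hL : ∀ x y z : G, (x*y)*z = y*(z*x)) (a b c d e : G) :
    (a * (b * (d * (c * e)))) = (a * (b * (c * (d * e)))) := by
  calc (a * (b * (d * (c * e))))
    _ = (a * (b * ((e * d) * c))) := by rw [← hL e d c]
    _ = (a * ((c * b) * (e * d))) := by rw [← hL c b (e * d)]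
    _ = (a * ((d * (c * b)) * e)) := by rw [← hL d (c * b) e]
    _ = ((e * a) * (d * (c * b))) := by rw [← hL e a (d * (c * b))]
    _ = (((c * b) * (e * a)) * d) := by rw [← hL (c * b) (e * a) d]
    _ = ((b * ((e * a) * c)) * d) := by rw [hL c b (e * a)]
    _ = ((b * (a * (c * e))) * d) := by rw [hL e a c]
    _ = ((((c * e) * b) * a) * d) := by rw [← hL (c * e) b a]
    _ = (a * (d * ((c * e) * b))) := by rw [hL ((c * e) * b) a d]
    _ = (a * ((b * d) * (c * e))) := by rw [← hL b d (c * e)]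
    _ = (a * ((e * (b * d)) * c)) := by rw [← hL e (b * d) c]
    _ = (a * (((d * e) * b) * c)) := by rw [← hL d e b]
    _ = (a * (b * (c * (d * e)))) := by rw [hL (d * e) b c]

private lemma swap24 (hL : ∀ x y z : G, (x*y)*z = y*(z*x)) (a b c d e : G) :
    (a * (b * (e * (d * c)))) = (a * (b * (c * (d * e)))) := by
  calc (a * (b * (e * (d * c))))
    _ = (a * (((d * c) * b) * e)) := by rw [← hL (d * c) b e]
    _ = (a * ((c * (b * d)) * e)) := by rw [hL d c b]
    _ = (a * ((b * d) * (e * c))) := by rw [hL c (b * d) e]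
    _ = (a * (d * ((e * c) * b))) := by rw [hL b d (e * c)]
    _ = ((((e * c) * b) * a) * d) := by rw [← hL ((e * c) * b) a d]
    _ = ((b * (a * (e * c))) * d) := by rw [hL (e * c) b a]
    _ = ((b * ((c * a) * e)) * d) := by rw [← hL c a e]
    _ = (((e * b) * (c * a)) * d) := by rw [← hL e b (c * a)]
    _ = (((a * (e * b)) * c) * d) := by rw [← hL a (e * b) c]
    _ = (c * (d * (a * (e * b)))) := by rw [hL (a * (e * b)) c d]
    _ = (c * (((e * b) * d) * a)) := by rw [← hL (e * b) d a]
    _ = (c * ((b * (d * e)) * a)) := by rw [hL e b d]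
    _ = ((a * c) * (b * (d * e))) := by rw [← hL a c (b * (d * e))]
    _ = (((d * e) * (a * c)) * b) := by rw [← hL (d * e) (a * c) b]
    _ = (((c * (d * e)) * a) * b) := by rw [← hL c (d * e) a]
    _ = (a * (b * (c * (d * e)))) := by rw [hL (c * (d * e)) a b]

private lemma swap34 (hL : ∀ x y z : G, (x*y)*z = y*(z*x)) (a b c d e : G) :
    (a * (b * (c * (e * d)))) = (a * (b * (c * (d * e)))) := by
  calc (a * (b * (c * (e * d))))
    _ = (a * (((e * d) * b) * c)) := by rw [← hL (e * d) b c]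
    _ = (a * ((d * (b * e)) * c)) := by rw [hL e d b]
    _ = (a * ((b * e) * (c * d))) := by rw [hL d (b * e) c]
    _ = (a * (e * ((c * d) * b))) := by rw [hL b e (c * d)]
    _ = ((((c * d) * b) * a) * e) := by rw [← hL ((c * d) * b) a e]
    _ = ((b * (a * (c * d))) * e) := by rw [hL (c * d) b a]
    _ = ((b * ((d * a) * c)) * e) := by rw [← hL d a c]
    _ = (((c * b) * (d * a)) * e) := by rw [← hL c b (d * a)]
    _ = ((d * a) * (e * (c * b))) := by rw [hL (c * b) (d * a) e]
    _ = ((d * a) * ((b * e) * c)) := by rw [← hL b e c]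
    _ = ((c * (d * a)) * (b * e)) := by rw [← hL c (d * a) (b * e)]
    _ = (((a * c) * d) * (b * e)) := by rw [← hL a c d]
    _ = ((e * ((a * c) * d)) * b) := by rw [← hL e ((a * c) * d) b]
    _ = (((d * e) * (a * c)) * b) := by rw [← hL d e (a * c)]
    _ = (((c * (d * e)) * a) * b) := by rw [← hL c (d * e) a]
    _ = (a * (b * (c * (d * e)))) := by rw [hL (c * (d * e)) a b]

private def c5 (x : Fin 5 → G) : G := x 0 * (x 1 * (x 2 * (x 3 * x 4)))

private lemma evalC (hL : ∀ x y z : G, (x*y)*z = y*(z*x)) (u : Brack) (hu : u.leaves = 5)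
    (b : ℕ → G) : u.eval b 0 = b 0 * (b 1 * (b 2 * (b 3 * b 4))) := by
  cases u with
  | leaf => simp [Brack.leaves] at hu
  | node l r =>
    have hl := leaves_pos l; have hr := leaves_pos r
    simp [Brack.leaves] at hu
    rcases (by omega : l.leaves = 1 ∧ r.leaves = 4 ∨ l.leaves = 2 ∧ r.leaves = 3 ∨
      l.leaves = 3 ∧ r.leaves = 2 ∨ l.leaves = 4 ∧ r.leaves = 1) with ⟨h1,h2⟩|⟨h1,h2⟩|⟨h1,h2⟩|⟨h1,h2⟩
    · rw [enum1 l h1]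
      rcases enum4 r h2 with h3|h3|h3|h3|h3 <;> rw [h3] <;>
        simp [Brack.eval, Brack.leaves] <;>
        first
          | exact shape1 hL (b 0) (b 1) (b 2) (b 3) (b 4)
          | exact shape2 hL (b 0) (b 1) (b 2) (b 3) (b 4)
          | exact shape3 hL (b 0) (b 1) (b 2) (b 3) (b 4)
          | exact shape4 hL (b 0) (b 1) (b 2) (b 3) (b 4)
          | exact shape5 hL (b 0) (b 1) (b 2) (b 3) (b 4)
    · rw [enum2 l h1]
      rcases enum3 r h2 with h3|h3 <;> rw [h3] <;>
        simp [Brack.eval, Brack.leaves] <;>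
        first
          | exact shape6 hL (b 0) (b 1) (b 2) (b 3) (b 4)
          | exact shape7 hL (b 0) (b 1) (b 2) (b 3) (b 4)
    · rcases enum3 l h1 with h3|h3 <;> rw [h3, enum2 r h2] <;>
        simp [Brack.eval, Brack.leaves] <;>
        first
          | exact shape8 hL (b 0) (b 1) (b 2) (b 3) (b 4)
          | exact shape9 hL (b 0) (b 1) (b 2) (b 3) (b 4)
    · rcases enum4 l h1 with h3|h3|h3|h3|h3 <;> rw [h3, enum1 r h2] <;>
        simp [Brack.eval, Brack.leaves] <;>
        first
          | exact shape10 hL (b 0) (b 1) (b 2) (b 3) (b 4)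
          | exact shape11 hL (b 0) (b 1) (b 2) (b 3) (b 4)
          | exact shape12 hL (b 0) (b 1) (b 2) (b 3) (b 4)
          | exact shape13 hL (b 0) (b 1) (b 2) (b 3) (b 4)
          | exact shape14 hL (b 0) (b 1) (b 2) (b 3) (b 4)

private lemma c5_swap (hL : ∀ x y z : G, (x*y)*z = y*(z*x)) (i j : Fin 5) (x : Fin 5 → G) :
    c5 (x ∘ Equiv.swap i j) = c5 x := by
  fin_cases i <;> fin_cases j <;>
    simp only [c5, Function.comp_apply, Equiv.swap_apply_def, Fin.ext_iff] <;>
    norm_num <;>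
    first
      | rfl
      | exact swap01 hL _ _ _ _ _
      | exact swap02 hL _ _ _ _ _
      | exact swap03 hL _ _ _ _ _
      | exact swap04 hL _ _ _ _ _
      | exact swap12 hL _ _ _ _ _
      | exact swap13 hL _ _ _ _ _
      | exact swap14 hL _ _ _ _ _
      | exact swap23 hL _ _ _ _ _
      | exact swap24 hL _ _ _ _ _
      | exact swap34 hL _ _ _ _ _

private lemma c5_perm (hL : ∀ x y z : G, (x*y)*z = y*(z*x)) (σ : Equiv.Perm (Fin 5)) :
    ∀ x : Fin 5 → G, c5 (x ∘ σ) = c5 x := by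
  refine Equiv.Perm.swap_induction_on σ (fun x => rfl) ?_
  intro f i j hij ih x
  have e : (x ∘ ⇑(Equiv.swap i j * f)) = (x ∘ ⇑(Equiv.swap i j)) ∘ ⇑f := by
    funext k; simp [Equiv.Perm.mul_apply]
  rw [e, ih (x ∘ ⇑(Equiv.swap i j)), c5_swap hL]

theorem nice5 (hL : ∀ x y z : G, (x*y)*z = y*(z*x)) : ACnice G 5 := by
  intro a s t hs ht f g
  rw [evalC hL s hs, evalC hL t ht]
  exact (c5_perm hL f (fun j : Fin 5 => a j.val)).trans
    (c5_perm hL g (fun j : Fin 5 => a j.val)).symm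

end
end UAC
-- === Part F1: combs, zigzags, matching ===
namespace UAC

def Rcomb : ℕ → Brack
  | 0 => .leaf
  | (k+1) => .node .leaf (Rcomb k)

def Lcomb : ℕ → Brack
  | 0 => .leaf
  | (k+1) => .node (Lcomb k) .leaf

def Zig : ℕ → Brack
  | 0 => .leaf
  | 1 => .node .leaf .leaf
  | (k+2) => .node .leaf (.node (Zig k) .leaf)

lemma Rcomb_leaves : ∀ k, (Rcomb k).leaves = k + 1
  | 0 => rfl
  | (k+1) => by simp [Rcomb, Brack.leaves, Rcomb_leaves k]; omega

lemma Lcomb_leaves : ∀ k, (Lcomb k).leaves = k + 1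
  | 0 => rfl
  | (k+1) => by simp [Lcomb, Brack.leaves, Lcomb_leaves k]

lemma Zig_leaves : ∀ k, (Zig k).leaves = k + 1
  | 0 => rfl
  | 1 => rfl
  | (k+2) => by simp [Zig, Brack.leaves, Zig_leaves k]; omega

def Matches : Brack → Brack → Prop
  | .leaf, _ => True
  | .node _ _, .leaf => False
  | .node p q, .node a b => Matches p a ∧ Matches q b

def Occurs (p : Brack) : Brack → Prop
  | .leaf => Matches p .leaf
  | .node a b => Matches p (.node a b) ∨ Occurs p a ∨ Occurs p b

lemma occurs_of_matches (p u : Brack) (h : Matches p u) : Occurs p u := by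
  cases u <;> simp [Occurs] <;> tauto

lemma matches_leaf (p : Brack) (h : Matches p .leaf) : p = .leaf := by
  cases p with
  | leaf => rfl
  | node a b => exact absurd h (by simp [Matches])

def ld : Brack → ℕ
  | .leaf => 0
  | .node l _ => ld l + 1

def rd : Brack → ℕ
  | .leaf => 0
  | .node _ r => rd r + 1

lemma ld_Lcomb : ∀ k, ld (Lcomb k) = k
  | 0 => rfl
  | (k+1) => by simp [Lcomb, ld, ld_Lcomb k]

lemma rd_Rcomb : ∀ k, rd (Rcomb k) = k
  | 0 => rfl
  | (k+1) => by simp [Rcomb, rd, rd_Rcomb k]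

lemma matches_Rcomb : ∀ k p, Matches p (Rcomb k) → ∃ j, p = Rcomb j := by
  intro k
  induction k with
  | zero => intro p h; exact ⟨0, matches_leaf p h⟩
  | succ k ih =>
    intro p h
    cases p with
    | leaf => exact ⟨0, rfl⟩
    | node p1 p2 =>
      simp [Rcomb, Matches] at h
      obtain ⟨j, rfl⟩ := ih p2 h.2
      exact ⟨j+1, by rw [matches_leaf p1 h.1]; rfl⟩

lemma occurs_Rcomb : ∀ k p, Occurs p (Rcomb k) → ∃ j, p = Rcomb j := by
  intro k
  induction k with
  | zero => intro p h; exact ⟨0, matches_leaf p h⟩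
  | succ k ih =>
    intro p h
    rcases h with h | h | h
    · exact matches_Rcomb (k+1) p h
    · exact ⟨0, matches_leaf p h⟩
    · exact ih p h

lemma matches_Lcomb : ∀ k p, Matches p (Lcomb k) → ∃ j, p = Lcomb j := by
  intro k
  induction k with
  | zero => intro p h; exact ⟨0, matches_leaf p h⟩
  | succ k ih =>
    intro p h
    cases p with
    | leaf => exact ⟨0, rfl⟩
    | node p1 p2 =>
      simp [Lcomb, Matches] at h
      obtain ⟨j, rfl⟩ := ih p1 h.1
      exact ⟨j+1, by rw [matches_leaf p2 h.2]; rfl⟩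

lemma occurs_Lcomb : ∀ k p, Occurs p (Lcomb k) → ∃ j, p = Lcomb j := by
  intro k
  induction k with
  | zero => intro p h; exact ⟨0, matches_leaf p h⟩
  | succ k ih =>
    intro p h
    rcases h with h | h | h
    · exact matches_Lcomb (k+1) p h
    · exact ih p h
    · exact ⟨0, matches_leaf p h⟩

lemma matches_zig_bound : ∀ k p, Matches p (Zig k) → ld p ≤ 1 ∧ rd p ≤ 2 := by
  intro k
  match k with
  | 0 => intro p h; rw [matches_leaf p h]; simp [ld, rd]
  | 1 =>
    intro p h
    cases p with
    | leaf => simp [ld, rd]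
    | node p1 p2 =>
      simp [Zig, Matches] at h
      rw [matches_leaf p1 h.1, matches_leaf p2 h.2]
      simp [ld, rd]
  | (k+2) =>
    intro p h
    cases p with
    | leaf => simp [ld, rd]
    | node p1 p2 =>
      simp [Zig, Matches] at h
      rw [matches_leaf p1 h.1]
      have hrd : rd p2 ≤ 1 := by
        cases p2 with
        | leaf => simp [rd]
        | node q1 q2 =>
          simp [Matches] at h
          rw [matches_leaf q2 h.2.2]
          simp [rd]
      simp [ld, rd]; omega

lemma occurs_zig_bound : ∀ k p, Occurs p (Zig k) → ld p ≤ 2 ∧ rd p ≤ 2 := by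
  intro k
  induction k using Zig.induct with
  | case1 => intro p h; rw [matches_leaf p h]; simp [ld, rd]
  | case2 =>
    intro p h
    rcases h with h | h | h
    · have := matches_zig_bound 1 p h; omega
    · rw [matches_leaf p h]; simp [ld, rd]
    · rw [matches_leaf p h]; simp [ld, rd]
  | case3 k ih =>
    intro p h
    rcases h with h | h | h
    · have := matches_zig_bound (k+2) p h; omega
    · rw [matches_leaf p h]; simp [ld, rd]
    · rcases h with h | h | h
      · -- Matches p (.node (Zig k) .leaf)
        cases p with
        | leaf => simp [ld, rd]
        | node q1 q2 =>
          simp [Matches] at h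
          have h1 := matches_zig_bound k q1 h.1
          rw [matches_leaf q2 h.2]
          simp [ld, rd]; omega
      · exact ih p h
      · rw [matches_leaf p h]; simp [ld, rd]

lemma Lcomb_ne_Rcomb (k : ℕ) (hk : 2 ≤ k) : Lcomb k ≠ Rcomb k := by
  match k, hk with
  | (k+2), _ => simp [Lcomb, Rcomb]

end UAC
-- === Part F2: the relatively free magma and invariants ===
namespace UAC

section
variable {n : ℕ} (s t : Brack) (f : Equiv.Perm (Fin n))

inductive Rel : FreeMagma ℕ → FreeMagma ℕ → Prop
  | base (w : ℕ → FreeMagma ℕ) : Rel (s.eval w 0) (t.eval (fun i => w (permNat f i)) 0)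
  | refl (x) : Rel x x
  | symm {x y} : Rel x y → Rel y x
  | trans {x y z} : Rel x y → Rel y z → Rel x z
  | mul {a b c d} : Rel a b → Rel c d → Rel (a*c) (b*d)

def relSetoid : Setoid (FreeMagma ℕ) :=
  ⟨Rel s t f, ⟨Rel.refl, Rel.symm, Rel.trans⟩⟩

def MQ := Quotient (relSetoid s t f)

instance : Mul (MQ s t f) :=
  ⟨Quotient.map₂ (· * ·) (fun _ _ h _ _ h' => Rel.mul h h')⟩

def mk (x : FreeMagma ℕ) : MQ s t f := Quotient.mk (relSetoid s t f) x

lemma mk_mul (x y : FreeMagma ℕ) : (mk s t f x) * (mk s t f y) = mk s t f (x * y) := rfl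

lemma eval_mk (u : Brack) (w : ℕ → FreeMagma ℕ) :
    ∀ k, u.eval (fun i => mk s t f (w i)) k = mk s t f (u.eval w k) := by
  induction u with
  | leaf => intro k; rfl
  | node l r ihl ihr => intro k; simp only [Brack.eval, ihl, ihr, mk_mul]

lemma satisfiesMQ : Satisfies (MQ s t f) s t f := by
  intro a
  set w : ℕ → FreeMagma ℕ := fun i => (a i).out with hw
  have ha : ∀ i, mk s t f (w i) = a i := fun i => Quotient.out_eq (a i)
  have e1 : a = fun i => mk s t f (w i) := funext fun i => (ha i).symm
  rw [e1]
  rw [eval_mk s t f s w 0]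
  have e2 : (fun i => mk s t f (w (permNat f i))) = fun i => mk s t f ((fun j => w (permNat f j)) i) := rfl
  rw [e2, eval_mk s t f t (fun j => w (permNat f j)) 0]
  exact Quotient.sound (Rel.base w)

-- invariance principle
lemma inv_pres {α : Type} (V : FreeMagma ℕ → α)
    (hmul : ∀ a b c d, V a = V b → V c = V d → V (a*c) = V (b*d))
    (hbase : ∀ w : ℕ → FreeMagma ℕ, V (s.eval w 0) = V (t.eval (fun i => w (permNat f i)) 0)) :
    ∀ {x y}, Rel s t f x y → V x = V y := by
  intro x y h
  induction h with
  | base w => exact hbase w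
  | refl x => rfl
  | symm _ ih => exact ih.symm
  | trans _ _ ih1 ih2 => exact ih1.trans ih2
  | mul _ _ ih1 ih2 => exact hmul _ _ _ _ ih1 ih2

end

-- basic invariant functions on FreeMagma ℕ
def fst : FreeMagma ℕ → ℕ
  | .of x => x
  | .mul a _ => fst a

def lst : FreeMagma ℕ → ℕ
  | .of x => x
  | .mul _ b => lst b

def csum (c : ℕ → ℕ) : FreeMagma ℕ → ℕ
  | .of x => c x
  | .mul a b => csum c a + csum c b

def dsum (c : ℕ → ℕ) : FreeMagma ℕ → ℕ
  | .of _ => 0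
  | .mul a b => dsum c a + dsum c b + csum c a + csum c b

@[simp] lemma fst_of (x : ℕ) : fst (.of x) = x := rfl
@[simp] lemma fst_mul (a b : FreeMagma ℕ) : fst (a * b) = fst a := rfl
@[simp] lemma lst_of (x : ℕ) : lst (.of x) = x := rfl
@[simp] lemma lst_mul (a b : FreeMagma ℕ) : lst (a * b) = lst b := rfl
@[simp] lemma csum_of (c : ℕ → ℕ) (x : ℕ) : csum c (.of x) = c x := rfl
@[simp] lemma csum_mul (c : ℕ → ℕ) (a b : FreeMagma ℕ) : csum c (a * b) = csum c a + csum c b := rfl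
@[simp] lemma dsum_of (c : ℕ → ℕ) (x : ℕ) : dsum c (.of x) = 0 := rfl
@[simp] lemma dsum_mul (c : ℕ → ℕ) (a b : FreeMagma ℕ) :
    dsum c (a * b) = dsum c a + dsum c b + csum c a + csum c b := rfl

lemma fst_eval (u : Brack) (w : ℕ → FreeMagma ℕ) : ∀ k, fst (u.eval w k) = fst (w k) := by
  induction u with
  | leaf => intro k; rfl
  | node l r ihl ihr => intro k; simp only [Brack.eval, fst_mul, ihl]

lemma lst_eval (u : Brack) (w : ℕ → FreeMagma ℕ) :
    ∀ k, lst (u.eval w k) = lst (w (k + u.leaves - 1)) := by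
  induction u with
  | leaf => intro k; simp [Brack.eval, Brack.leaves]
  | node l r ihl ihr =>
    intro k
    simp only [Brack.eval, lst_mul, ihr]
    have e : k + l.leaves + r.leaves - 1 = k + (Brack.node l r).leaves - 1 := by
      simp only [Brack.leaves]; omega
    rw [e]

-- shape
def sh : FreeMagma ℕ → Brack
  | .of _ => .leaf
  | .mul a b => .node (sh a) (sh b)

@[simp] lemma sh_of (x : ℕ) : sh (.of x) = .leaf := rfl
@[simp] lemma sh_mul (a b : FreeMagma ℕ) : sh (a * b) = .node (sh a) (sh b) := rfl

lemma matches_sh_eval (u : Brack) (w : ℕ → FreeMagma ℕ) :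
    ∀ k, Matches u (sh (u.eval w k)) := by
  induction u with
  | leaf => intro k; trivial
  | node l r ihl ihr =>
    intro k
    simp only [Brack.eval, sh_mul]
    exact ⟨ihl k, ihr _⟩

lemma sh_eval_of (u : Brack) (b : ℕ → ℕ) :
    ∀ k, sh (u.eval (fun i => .of (b i)) k) = u := by
  induction u with
  | leaf => intro k; rfl
  | node l r ihl ihr => intro k; simp only [Brack.eval, sh_mul, ihl, ihr]

section
variable {n : ℕ} (s t : Brack) (f : Equiv.Perm (Fin n))

def Rigid (x : FreeMagma ℕ) : Prop := ¬ Occurs s (sh x) ∧ ¬ Occurs t (sh x)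

lemma rigid_mul {a b : FreeMagma ℕ} (h : Rigid s t (a * b)) : Rigid s t a ∧ Rigid s t b := by
  obtain ⟨h1, h2⟩ := h
  simp only [sh_mul, Occurs] at h1 h2
  push_neg at h1 h2
  exact ⟨⟨h1.2.1, h2.2.1⟩, ⟨h1.2.2, h2.2.2⟩⟩

lemma rigid_pres : ∀ {x y}, Rel s t f x y → Rigid s t x ∨ Rigid s t y → x = y := by
  intro x y h
  induction h with
  | base w =>
    intro h
    exfalso
    rcases h with ⟨h1, _⟩ | ⟨_, h2⟩
    · exact h1 (occurs_of_matches _ _ (matches_sh_eval s w 0))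
    · exact h2 (occurs_of_matches _ _ (matches_sh_eval t _ 0))
  | refl x => intro _; rfl
  | symm _ ih => intro h; exact (ih h.symm).symm
  | trans h1 h2 ih1 ih2 =>
    intro h
    rcases h with h | h
    · have e1 := ih1 (Or.inl h)
      have e2 := ih2 (Or.inl (e1 ▸ h))
      exact e1.trans e2
    · have e2 := ih2 (Or.inr h)
      have e1 := ih1 (Or.inr (e2 ▸ h))
      exact e1.trans e2
  | mul h1 h2 ih1 ih2 =>
    intro h
    rcases h with h | h
    · obtain ⟨ha, hc⟩ := rigid_mul s t h
      rw [ih1 (Or.inl ha), ih2 (Or.inl hc)]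
    · obtain ⟨hb, hd⟩ := rigid_mul s t h
      rw [ih1 (Or.inr hb), ih2 (Or.inr hd)]

end
end UAC
-- === Part F3: transfer, key extraction, witnesses ===
namespace UAC

lemma permNat_val {n : ℕ} (f : Equiv.Perm (Fin n)) (i : ℕ) (h : i < n) :
    permNat f i = (f ⟨i, h⟩ : ℕ) := by simp [permNat, h]

lemma permNat_one {n : ℕ} (i : ℕ) : permNat (1 : Equiv.Perm (Fin n)) i = i := by
  unfold permNat
  split <;> simp

section
variable {n : ℕ} (s t : Brack) (f : Equiv.Perm (Fin n))

instance : Mul (ULift.{w} (MQ s t f)) := ⟨fun x y => ⟨x.down * y.down⟩⟩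

lemma eval_down (u : Brack) (b : ℕ → ULift.{w} (MQ s t f)) :
    ∀ k, (u.eval b k).down = u.eval (fun i => (b i).down) k := by
  induction u with
  | leaf => intro k; rfl
  | node l r ihl ihr => intro k; simp only [Brack.eval]; rw [← ihl, ← ihr]; rfl

lemma satisfiesU : Satisfies (ULift.{w} (MQ s t f)) s t f := by
  intro a
  have h := satisfiesMQ s t f (fun i => (a i).down)
  exact ULift.down_injective (by rw [eval_down, eval_down]; exact h)

lemma keyRel (m : ℕ) (hnice : ACnice (ULift.{w} (MQ s t f)) m)
    (s' t' : Brack) (hs' : s'.leaves = m) (ht' : t'.leaves = m)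
    (f' g' : Equiv.Perm (Fin m)) :
    Rel s t f (s'.eval (fun i => .of (permNat f' i)) 0)
              (t'.eval (fun i => .of (permNat g' i)) 0) := by
  have h := hnice (fun i => ULift.up (mk s t f (.of i))) s' t' hs' ht' f' g'
  have hd := congrArg ULift.down h
  rw [eval_down, eval_down] at hd
  have e1 : (fun i => ((fun j => (ULift.up (mk s t f (.of j)) : ULift.{w} (MQ s t f))) (permNat f' i)).down)
      = fun i => mk s t f ((fun j => (FreeMagma.of j : FreeMagma ℕ)) (permNat f' i)) := rfl
  have e2 : (fun i => ((fun j => (ULift.up (mk s t f (.of j)) : ULift.{w} (MQ s t f))) (permNat g' i)).down)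
      = fun i => mk s t f ((fun j => (FreeMagma.of j : FreeMagma ℕ)) (permNat g' i)) := rfl
  rw [e1, e2, eval_mk, eval_mk] at hd
  exact Quotient.exact hd

end

-- the weight function: indicator of variable 0
def c0 : ℕ → ℕ := fun x => if x = 0 then 1 else 0

lemma tail_zero (u : Brack) (b : ℕ → ℕ) :
    ∀ k, (∀ i, k ≤ i → b i ≠ 0) →
      csum c0 (u.eval (fun i => .of (b i)) k) = 0 ∧
      dsum c0 (u.eval (fun i => .of (b i)) k) = 0 := by
  induction u with
  | leaf =>
    intro k hk
    simp [Brack.eval, c0, hk k le_rfl]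
  | node l r ihl ihr =>
    intro k hk
    have h1 := ihl k hk
    have h2 := ihr (k + l.leaves) (fun i hi => hk i (by omega))
    simp [Brack.eval, h1.1, h1.2, h2.1, h2.2]

lemma dsum_Rcomb (k : ℕ) (b : ℕ → ℕ) (hb : ∀ i, 2 ≤ i → b i ≠ 0) :
    dsum c0 ((Rcomb (k+2)).eval (fun i => .of (b i)) 0) =
      (if b 0 = 0 then 1 else 0) + 2 * (if b 1 = 0 then 1 else 0) := by
  have e : Rcomb (k+2) = .node .leaf (.node .leaf (Rcomb k)) := rfl
  rw [e]
  have ht := tail_zero (Rcomb k) b 2 hb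
  simp [Brack.eval, Brack.leaves, ht.1, ht.2, c0]
  split_ifs <;> omega

end UAC
-- === Part F4: main forward argument ===
namespace UAC
universe w

theorem forward {n : ℕ} (hn : 1 ≤ n) (s t : Brack) (hs : s.leaves = n) (ht : t.leaves = n)
    (f : Equiv.Perm (Fin n))
    (H : ∀ (G : Type w) [Mul G], Satisfies G s t f → ∃ m, 3 ≤ m ∧ ACnice G m) :
    ∃ h : n = 3,
        (s = Brack.node (.node .leaf .leaf) .leaf ∧
            t = Brack.node .leaf (.node .leaf .leaf) ∧
            (finCongr h).permCongr f = finRotate 3) ∨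
        (s = Brack.node .leaf (.node .leaf .leaf) ∧
            t = Brack.node (.node .leaf .leaf) .leaf ∧
            (finCongr h).permCongr f = (finRotate 3)⁻¹) := by
  obtain ⟨m, hm3, hnice⟩ := H (ULift.{w} (MQ s t f)) (satisfiesU s t f)
  have key := keyRel s t f m hnice
  have h0m : 0 < m := by omega
  have h1m : 1 < m := by omega
  have hm1 : m - 1 < m := by omega
  set pσ : Equiv.Perm (Fin m) := Equiv.swap ⟨0, h0m⟩ ⟨1, h1m⟩ with hpσ
  set pτ : Equiv.Perm (Fin m) := Equiv.swap ⟨0, h0m⟩ ⟨m-1, hm1⟩ with hpτ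
  have hRl : (Rcomb (m-1)).leaves = m := by rw [Rcomb_leaves]; omega
  have hLl : (Lcomb (m-1)).leaves = m := by rw [Lcomb_leaves]; omega
  have hσ0 : permNat pσ 0 = 1 := by
    rw [permNat_val pσ 0 h0m, hpσ, Equiv.swap_apply_left]
  have hσ1 : permNat pσ 1 = 0 := by
    rw [permNat_val pσ 1 h1m, hpσ, Equiv.swap_apply_right]
  have hσge : ∀ i, 2 ≤ i → permNat pσ i ≠ 0 := by
    intro i hi
    by_cases h : i < m
    · rw [permNat_val pσ i h, hpσ,
        Equiv.swap_apply_of_ne_of_ne (by simp [Fin.ext_iff]; omega) (by simp [Fin.ext_iff]; omega)]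
      simp; omega
    · unfold permNat; rw [dif_neg h]; omega
  have hτ : permNat pτ (m-1) = 0 := by
    rw [permNat_val pτ (m-1) hm1, hpτ, Equiv.swap_apply_right]
  -- Invariant A: the first variable
  have hA : permNat f 0 ≠ 0 := by
    intro h0
    have hrel := key (Rcomb (m-1)) (Rcomb (m-1)) hRl hRl 1 pσ
    have hinv := inv_pres s t f fst
      (fun a b c d h1 _ => by rw [fst_mul, fst_mul, h1])
      (fun w => by simp only [fst_eval]; rw [h0]) hrel
    simp only [fst_eval, fst_of] at hinv
    rw [permNat_one, hσ0] at hinv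
    omega
  -- Invariant B: the last variable
  have hB : permNat f (n-1) ≠ n-1 := by
    intro hl
    have hrel := key (Rcomb (m-1)) (Rcomb (m-1)) hRl hRl 1 pτ
    have hinv := inv_pres s t f lst
      (fun a b c d _ h2 => by rw [lst_mul, lst_mul, h2])
      (fun w => by
        simp only [lst_eval]
        rw [hs, ht]
        simp only [Nat.zero_add]
        rw [hl]) hrel
    simp only [lst_eval, lst_of, hRl, Nat.zero_add] at hinv
    rw [permNat_one, hτ] at hinv
    omega
  -- Invariant D kill
  have killD : ¬ (∀ w : ℕ → FreeMagma ℕ,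
      (dsum c0 (s.eval w 0), csum c0 (s.eval w 0)) =
      (dsum c0 (t.eval (fun i => w (permNat f i)) 0),
        csum c0 (t.eval (fun i => w (permNat f i)) 0))) := by
    intro hbase
    have hrel := key (Rcomb (m-1)) (Rcomb (m-1)) hRl hRl 1 pσ
    have hinv := inv_pres s t f (fun x => (dsum c0 x, csum c0 x))
      (fun a b c d h1 h2 => by
        simp only [dsum_mul, csum_mul, Prod.mk.injEq] at *
        omega)
      (fun w => hbase w) hrel
    have hd := congrArg Prod.fst hinv
    simp only at hd
    rw [show m - 1 = (m - 3) + 2 by omega] at hd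
    rw [dsum_Rcomb _ _ (fun i hi => by rw [permNat_one]; omega),
        dsum_Rcomb _ _ (fun i hi => hσge i hi)] at hd
    rw [permNat_one, permNat_one, hσ0, hσ1] at hd
    norm_num at hd
  -- rigidity kill
  have rigidKill : ∀ (u : Brack), u.leaves = m → ¬ Occurs s u → ¬ Occurs t u → False := by
    intro u hu hos hot
    have hrel := key u u hu hu 1 pσ
    have heq := rigid_pres s t f hrel
      (Or.inl ⟨by rw [sh_eval_of]; exact hos, by rw [sh_eval_of]; exact hot⟩)
    have hfst := congrArg fst heq
    simp only [fst_eval, fst_of] at hfst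
    rw [permNat_one, hσ0] at hfst
    omega
  -- n ≥ 2
  have hn2 : 2 ≤ n := by
    by_contra hcon
    have h1 : n = 1 := by omega
    subst h1
    apply hA
    rw [permNat_val f 0 (by omega)]
    have := (f ⟨0, by omega⟩).isLt
    omega
  -- n ≥ 3
  have hn3 : 3 ≤ n := by
    by_contra hcon
    have h2 : n = 2 := by omega
    subst h2
    have hs2 := enum2 s hs
    have ht2 := enum2 t ht
    have l0 : (0:ℕ) < 2 := by omega
    have l1 : (1:ℕ) < 2 := by omega
    rw [permNat_val f 0 l0] at hA
    have q0 := (f ⟨0, l0⟩).isLt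
    have q1 := (f ⟨1, l1⟩).isLt
    have v01 : (f ⟨0, l0⟩).val ≠ (f ⟨1, l1⟩).val := by
      intro h
      have h2 := f.injective (Fin.ext h)
      simp [Fin.ext_iff] at h2
    have e0 : permNat f 0 = 1 := by rw [permNat_val f 0 l0]; omega
    have e1 : permNat f 1 = 0 := by rw [permNat_val f 1 l1]; omega
    apply killD
    intro w
    rw [hs2, ht2]
    simp [Brack.eval, Brack.leaves, e0, e1, dsum_mul, csum_mul, Prod.mk.injEq] <;> omega
  -- comb structure
  have hcomb1 : s = Rcomb (n-1) ∨ t = Rcomb (n-1) := by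
    by_contra hc
    push_neg at hc
    refine rigidKill (Rcomb (m-1)) hRl ?_ ?_
    · intro hocc
      obtain ⟨j, hj⟩ := occurs_Rcomb _ _ hocc
      apply hc.1
      have hjl := congrArg Brack.leaves hj
      rw [hs, Rcomb_leaves] at hjl
      rw [hj]
      congr 1
      omega
    · intro hocc
      obtain ⟨j, hj⟩ := occurs_Rcomb _ _ hocc
      apply hc.2
      have hjl := congrArg Brack.leaves hj
      rw [ht, Rcomb_leaves] at hjl
      rw [hj]
      congr 1
      omega
  have hcomb2 : s = Lcomb (n-1) ∨ t = Lcomb (n-1) := by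
    by_contra hc
    push_neg at hc
    refine rigidKill (Lcomb (m-1)) hLl ?_ ?_
    · intro hocc
      obtain ⟨j, hj⟩ := occurs_Lcomb _ _ hocc
      apply hc.1
      have hjl := congrArg Brack.leaves hj
      rw [hs, Lcomb_leaves] at hjl
      rw [hj]
      congr 1
      omega
    · intro hocc
      obtain ⟨j, hj⟩ := occurs_Lcomb _ _ hocc
      apply hc.2
      have hjl := congrArg Brack.leaves hj
      rw [ht, Lcomb_leaves] at hjl
      rw [hj]
      congr 1
      omega
  have hLRne : Lcomb (n-1) ≠ Rcomb (n-1) := Lcomb_ne_Rcomb (n-1) (by omega)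
  -- case split
  rcases hcomb1 with hsR | htR
  · -- s = Rcomb (n-1); then t = Lcomb (n-1) (mirror branch)
    have htL : t = Lcomb (n-1) := by
      rcases hcomb2 with hsL | htL
      · exact absurd (hsL.symm.trans hsR) hLRne
      · exact htL
    -- n ≤ 3 via zigzag
    have hn4 : n ≤ 3 := by
      by_contra hcon
      push_neg at hcon
      have hZl : (Zig (m-1)).leaves = m := by rw [Zig_leaves]; omega
      refine rigidKill (Zig (m-1)) hZl ?_ ?_
      · intro hocc
        have hb := occurs_zig_bound _ _ hocc
        rw [hsR] at hb
        rw [rd_Rcomb] at hb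
        omega
      · intro hocc
        have hb := occurs_zig_bound _ _ hocc
        rw [htL] at hb
        rw [ld_Lcomb] at hb
        omega
    have h3 : n = 3 := by omega
    subst h3
    refine ⟨rfl, Or.inr ?_⟩
    have hs3 : s = Brack.node .leaf (.node .leaf .leaf) := by rw [hsR]; rfl
    have ht3 : t = Brack.node (.node .leaf .leaf) .leaf := by rw [htL]; rfl
    refine ⟨hs3, ht3, ?_⟩
    -- determine f
    have l0 : (0:ℕ) < 3 := by omega
    have l1 : (1:ℕ) < 3 := by omega
    have l2 : (2:ℕ) < 3 := by omega
    rw [permNat_val f 0 l0] at hA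
    rw [show (3:ℕ) - 1 = 2 from rfl, permNat_val f 2 l2] at hB
    have q0 := (f ⟨0, l0⟩).isLt
    have q1 := (f ⟨1, l1⟩).isLt
    have q2 := (f ⟨2, l2⟩).isLt
    have v01 : (f ⟨0, l0⟩).val ≠ (f ⟨1, l1⟩).val := by
      intro h; have h2 := f.injective (Fin.ext h); simp [Fin.ext_iff] at h2
    have v02 : (f ⟨0, l0⟩).val ≠ (f ⟨2, l2⟩).val := by
      intro h; have h2 := f.injective (Fin.ext h); simp [Fin.ext_iff] at h2
    have v12 : (f ⟨1, l1⟩).val ≠ (f ⟨2, l2⟩).val := by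
      intro h; have h2 := f.injective (Fin.ext h); simp [Fin.ext_iff] at h2
    have hcases : ((f ⟨0, l0⟩).val = 2 ∧ (f ⟨1, l1⟩).val = 0 ∧ (f ⟨2, l2⟩).val = 1) ∨
        ((f ⟨0, l0⟩).val = 1 ∧ (f ⟨1, l1⟩).val = 2 ∧ (f ⟨2, l2⟩).val = 0) ∨
        ((f ⟨0, l0⟩).val = 2 ∧ (f ⟨1, l1⟩).val = 1 ∧ (f ⟨2, l2⟩).val = 0) := by
      omega
    rcases hcases with ⟨e0, e1, e2⟩ | ⟨e0, e1, e2⟩ | ⟨e0, e1, e2⟩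
    · -- survivor: f = (finRotate 3)⁻¹
      have hcc : (finCongr (rfl : (3:ℕ) = 3)).permCongr f = f := by ext i; simp
      rw [hcc]
      apply Equiv.ext
      intro i
      fin_cases i
      · refine Fin.ext ((e0).trans ?_)
        decide
      · refine Fin.ext ((e1).trans ?_)
        decide
      · refine Fin.ext ((e2).trans ?_)
        decide
    · -- kill (1,2,0)
      exfalso
      apply killD
      intro w
      rw [hs3, ht3]
      have p0 : permNat f 0 = 1 := by rw [permNat_val f 0 l0, e0]
      have p1 : permNat f 1 = 2 := by rw [permNat_val f 1 l1, e1]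
      have p2 : permNat f 2 = 0 := by rw [permNat_val f 2 l2, e2]
      simp [Brack.eval, Brack.leaves, p0, p1, p2, dsum_mul, csum_mul, Prod.mk.injEq] <;> omega
    · -- kill (2,1,0)
      exfalso
      apply killD
      intro w
      rw [hs3, ht3]
      have p0 : permNat f 0 = 2 := by rw [permNat_val f 0 l0, e0]
      have p1 : permNat f 1 = 1 := by rw [permNat_val f 1 l1, e1]
      have p2 : permNat f 2 = 0 := by rw [permNat_val f 2 l2, e2]
      simp [Brack.eval, Brack.leaves, p0, p1, p2, dsum_mul, csum_mul, Prod.mk.injEq] <;> omega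
  · -- t = Rcomb (n-1); then s = Lcomb (n-1) (main branch)
    have hsL : s = Lcomb (n-1) := by
      rcases hcomb2 with hsL | htL
      · exact hsL
      · exact absurd (htL.symm.trans htR) hLRne
    have hn4 : n ≤ 3 := by
      by_contra hcon
      push_neg at hcon
      have hZl : (Zig (m-1)).leaves = m := by rw [Zig_leaves]; omega
      refine rigidKill (Zig (m-1)) hZl ?_ ?_
      · intro hocc
        have hb := occurs_zig_bound _ _ hocc
        rw [hsL] at hb
        rw [ld_Lcomb] at hb
        omega
      · intro hocc
        have hb := occurs_zig_bound _ _ hocc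
        rw [htR] at hb
        rw [rd_Rcomb] at hb
        omega
    have h3 : n = 3 := by omega
    subst h3
    refine ⟨rfl, Or.inl ?_⟩
    have hs3 : s = Brack.node (.node .leaf .leaf) .leaf := by rw [hsL]; rfl
    have ht3 : t = Brack.node .leaf (.node .leaf .leaf) := by rw [htR]; rfl
    refine ⟨hs3, ht3, ?_⟩
    have l0 : (0:ℕ) < 3 := by omega
    have l1 : (1:ℕ) < 3 := by omega
    have l2 : (2:ℕ) < 3 := by omega
    rw [permNat_val f 0 l0] at hA
    rw [show (3:ℕ) - 1 = 2 from rfl, permNat_val f 2 l2] at hB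
    have q0 := (f ⟨0, l0⟩).isLt
    have q1 := (f ⟨1, l1⟩).isLt
    have q2 := (f ⟨2, l2⟩).isLt
    have v01 : (f ⟨0, l0⟩).val ≠ (f ⟨1, l1⟩).val := by
      intro h; have h2 := f.injective (Fin.ext h); simp [Fin.ext_iff] at h2
    have v02 : (f ⟨0, l0⟩).val ≠ (f ⟨2, l2⟩).val := by
      intro h; have h2 := f.injective (Fin.ext h); simp [Fin.ext_iff] at h2
    have v12 : (f ⟨1, l1⟩).val ≠ (f ⟨2, l2⟩).val := by
      intro h; have h2 := f.injective (Fin.ext h); simp [Fin.ext_iff] at h2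
    have hcases : ((f ⟨0, l0⟩).val = 1 ∧ (f ⟨1, l1⟩).val = 2 ∧ (f ⟨2, l2⟩).val = 0) ∨
        ((f ⟨0, l0⟩).val = 2 ∧ (f ⟨1, l1⟩).val = 0 ∧ (f ⟨2, l2⟩).val = 1) ∨
        ((f ⟨0, l0⟩).val = 2 ∧ (f ⟨1, l1⟩).val = 1 ∧ (f ⟨2, l2⟩).val = 0) := by
      omega
    rcases hcases with ⟨e0, e1, e2⟩ | ⟨e0, e1, e2⟩ | ⟨e0, e1, e2⟩
    · -- survivor: f = finRotate 3
      have hcc : (finCongr (rfl : (3:ℕ) = 3)).permCongr f = f := by ext i; simp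
      rw [hcc]
      apply Equiv.ext
      intro i
      fin_cases i
      · refine Fin.ext ((e0).trans ?_)
        decide
      · refine Fin.ext ((e1).trans ?_)
        decide
      · refine Fin.ext ((e2).trans ?_)
        decide
    · -- kill (2,0,1)
      exfalso
      apply killD
      intro w
      rw [hs3, ht3]
      have p0 : permNat f 0 = 2 := by rw [permNat_val f 0 l0, e0]
      have p1 : permNat f 1 = 0 := by rw [permNat_val f 1 l1, e1]
      have p2 : permNat f 2 = 1 := by rw [permNat_val f 2 l2, e2]
      simp [Brack.eval, Brack.leaves, p0, p1, p2, dsum_mul, csum_mul, Prod.mk.injEq] <;> omega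
    · -- kill (2,1,0)
      exfalso
      apply killD
      intro w
      rw [hs3, ht3]
      have p0 : permNat f 0 = 2 := by rw [permNat_val f 0 l0, e0]
      have p1 : permNat f 1 = 1 := by rw [permNat_val f 1 l1, e1]
      have p2 : permNat f 2 = 0 := by rw [permNat_val f 2 l2, e2]
      simp [Brack.eval, Brack.leaves, p0, p1, p2, dsum_mul, csum_mul, Prod.mk.injEq] <;> omega

end UAC

/-- Theorem 5.7: a linear identity `⟨s,t,f⟩` of length `2n`, `n ≥ 1`, is ultimately
AC-nice (every magma satisfying it is `m`AC-nice for some `m ≥ 3`) if and only if, up to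
interchanging its two sides, it is the length-`6` identity `(a₁a₂)a₃ = a₂(a₃a₁)`, i.e.
`(xy)z = y(zx)` — the triple `⟨(∘∘)∘, ∘(∘∘), finRotate 3⟩`. -/
theorem stmt12.{w} (n : ℕ) (hn : 1 ≤ n)
    (s t : Brack) (hs : s.leaves = n) (ht : t.leaves = n) (f : Equiv.Perm (Fin n)) :
    (∀ (G : Type w) [Mul G], Satisfies G s t f → ∃ m, 3 ≤ m ∧ ACnice G m) ↔
      ∃ h : n = 3,
        (s = Brack.node (.node .leaf .leaf) .leaf ∧
            t = Brack.node .leaf (.node .leaf .leaf) ∧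
            (finCongr h).permCongr f = finRotate 3) ∨
        (s = Brack.node .leaf (.node .leaf .leaf) ∧
            t = Brack.node (.node .leaf .leaf) .leaf ∧
            (finCongr h).permCongr f = (finRotate 3)⁻¹) := by
  constructor
  · intro H
    exact UAC.forward hn s t hs ht f H
  · rintro ⟨h, hcase⟩
    subst h
    intro G _ hsat
    refine ⟨5, by omega, ?_⟩
    rcases hcase with ⟨hs', ht', hf⟩ | ⟨hs', ht', hf⟩
    · subst hs'; subst ht'
      have hcc : (finCongr (rfl : (3:ℕ) = 3)).permCongr f = f := by ext i; simp
      rw [hcc] at hf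
      apply UAC.nice5
      intro x y z
      have h := hsat (fun i => if i = 0 then x else if i = 1 then y else z)
      rw [hf] at h
      have p0 : permNat (finRotate 3 : Equiv.Perm (Fin 3)) 0 = 1 := by decide
      have p1 : permNat (finRotate 3 : Equiv.Perm (Fin 3)) 1 = 2 := by decide
      have p2 : permNat (finRotate 3 : Equiv.Perm (Fin 3)) 2 = 0 := by decide
      simp [Brack.eval, Brack.leaves, p0, p1, p2] at h
      exact h
    · subst hs'; subst ht'
      have hcc : (finCongr (rfl : (3:ℕ) = 3)).permCongr f = f := by ext i; simp
      rw [hcc] at hf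
      apply UAC.nice5
      intro x y z
      have h := hsat (fun i => if i = 0 then y else if i = 1 then z else x)
      rw [hf] at h
      have p0 : permNat ((finRotate 3)⁻¹ : Equiv.Perm (Fin 3)) 0 = 2 := by decide
      have p1 : permNat ((finRotate 3)⁻¹ : Equiv.Perm (Fin 3)) 1 = 0 := by decide
      have p2 : permNat ((finRotate 3)⁻¹ : Equiv.Perm (Fin 3)) 2 = 1 := by decide
      simp [Brack.eval, Brack.leaves, p0, p1, p2] at h
      exact h.symm
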